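/- If p₁ < p₂ < ⋯ < p_k are primes, then L(p₁p₂⋯p_k) ≤ min over 0 ≤ j ≤ k of 2^{k−j}·(log(p₁⋯p_j) + log 2), where the empty product p₁⋯p_0 equals 1. -/

import Mathlib

/-!
Every divisor of `m * n` is a product `d * e` with `d ∣ m` and `e ∣ n`, so `𝓛(m n)` is covered by
the `τ(n)` translates `log e + 𝓛(m)`, whence `L(m n) ≤ τ(n) L(m)`; moreover `𝓛(m) ⊆ [-log 2, log m)`.
Take `m = p₁ ⋯ p_j` and `n = p_{j+1} ⋯ p_k`, a product of `k - j` primes, so `τ(n) ≤ 2 ^ (k - j)`.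
-/

/-- `𝓛(a) = ⋃_{d ∣ a} [log d - log 2, log d)`. -/
def Lset (a : ℕ) : Set ℝ :=
  ⋃ d ∈ Nat.divisors a, Set.Ico (Real.log d - Real.log 2) (Real.log d)

/-- `L(a)`: the Lebesgue measure of `𝓛(a)`. -/
noncomputable def Lfun (a : ℕ) : ℝ := (MeasureTheory.volume (Lset a)).toReal

open MeasureTheory Pointwise Finset

lemma Lset_subset_Ico (a : ℕ) : Lset a ⊆ Set.Ico (-Real.log 2) (Real.log a) := by
  simp only [Lset, Set.iUnion_subset_iff]
  intro d hd
  have hd_pos : (0 : ℝ) < d := by exact_mod_cast Nat.pos_of_mem_divisors hd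
  have hd_le : (d : ℝ) ≤ a := by exact_mod_cast Nat.divisor_le hd
  exact Set.Ico_subset_Ico (by linarith [Real.log_natCast_nonneg d]) (Real.log_le_log hd_pos hd_le)

lemma volume_Lset_le (a : ℕ) : volume (Lset a) ≤ ENNReal.ofReal (Real.log a + Real.log 2) := by
  simpa using measure_mono (μ := volume) (Lset_subset_Ico a)

lemma Lset_mul_subset (m n : ℕ) : Lset (m * n) ⊆ ⋃ e ∈ n.divisors, Real.log e +ᵥ Lset m := by
  simp only [Lset, Nat.divisors_mul, Set.iUnion_subset_iff, Finset.mem_mul]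
  rintro _ ⟨d, hd, e, he, rfl⟩ x hx
  have hlog : Real.log ↑(d * e) = Real.log d + Real.log e := by
    push_cast
    exact Real.log_mul (by exact_mod_cast Nat.ne_of_gt (Nat.pos_of_mem_divisors hd))
      (by exact_mod_cast Nat.ne_of_gt (Nat.pos_of_mem_divisors he))
  rw [hlog, Set.mem_Ico] at hx
  refine Set.mem_biUnion he (Set.mem_vadd_set.mpr ⟨x - Real.log e, Set.mem_biUnion hd ?_, ?_⟩)
  · constructor <;> linarith
  · simp [vadd_eq_add]

lemma volume_Lset_mul_le (m n : ℕ) : volume (Lset (m * n)) ≤ #n.divisors * volume (Lset m) :=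
  calc volume (Lset (m * n)) ≤ ∑ e ∈ n.divisors, volume (Real.log e +ᵥ Lset m) :=
        (measure_mono (Lset_mul_subset m n)).trans (measure_biUnion_finset_le _ _)
    _ = #n.divisors * volume (Lset m) := by simp [measure_vadd]

lemma Lfun_le (a : ℕ) : Lfun a ≤ Real.log a + Real.log 2 :=
  ENNReal.toReal_le_of_le_ofReal (by positivity) (volume_Lset_le a)

lemma Lfun_mul_le (m n : ℕ) : Lfun (m * n) ≤ #n.divisors * Lfun m := by
  have hfin : volume (Lset m) ≠ ⊤ := ne_top_of_le_ne_top ENNReal.ofReal_ne_top (volume_Lset_le m)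
  simpa [Lfun] using ENNReal.toReal_mono (by finiteness) (volume_Lset_mul_le m n)

lemma card_divisors_prod_prime_le {ι : Type*} (s : Finset ι) (p : ι → ℕ)
    (hp : ∀ i ∈ s, (p i).Prime) :
    #(∏ i ∈ s, p i).divisors ≤ 2 ^ #s := by
  classical
  induction s using Finset.induction with
  | empty => simp
  | insert i s hi ih =>
    rw [prod_insert hi, card_insert_of_notMem hi, Nat.divisors_mul, pow_succ']
    calc #((p i).divisors * (∏ j ∈ s, p j).divisors)
        ≤ #(p i).divisors * #(∏ j ∈ s, p j).divisors := card_mul_le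
      _ ≤ 2 * 2 ^ #s := by
        have hpi := hp i (mem_insert_self i s)
        rw [hpi.divisors, card_pair hpi.one_lt.ne]
        exact Nat.mul_le_mul_left 2 (ih fun j hj => hp j (mem_insert_of_mem hj))

theorem Lfun_product_of_primes_general (k : ℕ) (p : Fin k → ℕ)
    (hp : ∀ i, (p i).Prime) :
    ∀ j : ℕ, j ≤ k →
      Lfun (∏ i, p i) ≤
        2 ^ (k - j) *
          (Real.log ((∏ i ∈ Finset.univ.filter fun i : Fin k => (i : ℕ) < j, p i : ℕ) : ℝ) +
            Real.log 2) := by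
  intro j hj
  have hcard : #{i : Fin k | ¬ (i : ℕ) < j} = k - j := by
    rw [filter_not, card_sdiff_of_subset (filter_subset _ _), Fin.card_filter_val_lt, card_univ,
      Fintype.card_fin, min_eq_right hj]
  have htail :
      (#(∏ i ∈ univ.filter fun i : Fin k => ¬ (i : ℕ) < j, p i).divisors : ℝ) ≤ 2 ^ (k - j) :=
    mod_cast hcard ▸ card_divisors_prod_prime_le _ p fun i _ => hp i
  rw [← prod_filter_mul_prod_filter_not univ fun i : Fin k => (i : ℕ) < j]
  exact (Lfun_mul_le _ _).trans
    (mul_le_mul htail (Lfun_le _) ENNReal.toReal_nonneg (by positivity))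

theorem Lfun_product_of_primes (k : ℕ) (p : Fin k → ℕ)
    (hp : ∀ i, (p i).Prime) (hmono : StrictMono p) :
    ∀ j : ℕ, j ≤ k →
      Lfun (∏ i, p i) ≤
        2 ^ (k - j) *
          (Real.log ((∏ i ∈ Finset.univ.filter fun i : Fin k => (i : ℕ) < j, p i : ℕ) : ℝ) +
            Real.log 2) :=
  Lfun_product_of_primes_general k p hp
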